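/- arXiv:1008.1020 — 2 statements merged into one kernel-verified Lean document; each statement's English description precedes it below -/
import Mathlib

section
/- Under assumptions (S1)–(S2), with $\bar x=x(\cdot;\bar u)$ and $x^\alpha$ the solution of the convex-combination dynamics $\dot x^\alpha=(1-\alpha)f(t,x^\alpha,\bar u(t))+\alpha f(t,x^\alpha,u(t))$, $x^\alpha(0)=x_0$, the difference quotient $X^\alpha(t)=(x^\alpha(t)-\bar x(t))/\alpha$ converges uniformly on $[0,T]$ as $\alpha\to 0^+$ to the solution $X$ of the variational equation $\dot X(t)=f_x(t,\bar x(t),\bar u(t))^\top X(t)+f(t,\bar x(t),u(t))-f(t,\bar x(t),\bar u(t))$, $X(0)=0$. -/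
/-!
Write `d_α = x^α - x̄`. Its integral equation has integrand bounded by `L ‖d_α‖` plus `α` times
`‖f(t, x̄, u) - f(t, x̄, ū)‖`, so Grönwall's inequality in integral form gives `‖d_α‖ ≤ C α`
uniformly on `[0, T]`. Subtracting the variational equation, `Y_α = d_α / α - X` satisfies an
integral equation whose integrand is bounded by `L ‖Y_α‖` plus the error `e_α` made by
linearising `f(t, ·, ū)` at `x̄` (divided by `α`) plus `2 L ‖d_α‖`. Grönwall again bounds
`‖Y_α‖` by `e^{LT} ∫₀ᵀ e_α`, and `∫₀ᵀ e_α → 0` by dominated convergence, because `d_α = O(α)`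
and `f` is differentiable in `x`.
-/

open MeasureTheory Set Filter Topology TopologicalSpace

theorem add_mul_gronwallBound_δ0 (a K x : ℝ) :
    a + K * gronwallBound 0 K a x = a * Real.exp (K * x) := by
  rcases eq_or_ne K 0 with rfl | hK
  · simp [gronwallBound_K0]
  · rw [gronwallBound_of_K_ne_0 hK]
    field_simp
    ring

theorem le_mul_exp_of_le_add_mul_integral {φ : ℝ → ℝ} {a K T : ℝ} (hK : 0 ≤ K) (ha : 0 ≤ a)
    (hφc : ContinuousOn φ (Icc 0 T)) (hφ0 : ∀ t ∈ Icc 0 T, 0 ≤ φ t)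
    (hφ : ∀ t ∈ Icc 0 T, φ t ≤ a + K * ∫ s in (0 : ℝ)..t, φ s) :
    ∀ t ∈ Icc 0 T, φ t ≤ a * Real.exp (K * T) := by
  intro t ht
  have hT : 0 ≤ T := ht.1.trans ht.2
  -- `ψ` has right derivative `φ ≤ a + K ψ`, so the differential Grönwall bound applies to it.
  set ψ : ℝ → ℝ := fun t => ∫ s in (0 : ℝ)..t, φ s
  have hψ0 : ∀ x ∈ Icc 0 T, 0 ≤ ψ x := fun x hx =>
    intervalIntegral.integral_nonneg hx.1 fun s hs => hφ0 s ⟨hs.1, hs.2.trans hx.2⟩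
  have hψc : ContinuousOn ψ (Icc 0 T) := by
    simpa only [uIcc_of_le hT] using intervalIntegral.continuousOn_primitive_interval
      (hφc.integrableOn_Icc.mono_set (uIcc_of_le hT).subset)
  have hψ' : ∀ x ∈ Ico 0 T, HasDerivWithinAt ψ (φ x) (Ici x) x := by
    intro x hx
    have : Fact (x ∈ Icc 0 T) := ⟨Ico_subset_Icc_self hx⟩
    refine (intervalIntegral.integral_hasDerivWithinAt_right (s := Icc 0 T) (t := Icc 0 T)
      (hφc.mono (uIcc_subset_Icc (left_mem_Icc.2 hT) this.out)).intervalIntegrable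
      (hφc.stronglyMeasurableAtFilter_nhdsWithin measurableSet_Icc x)
      (hφc x this.out)).mono_of_mem_nhdsWithin ?_
    exact mem_of_superset (Icc_mem_nhdsGE hx.2) (Icc_subset_Icc_left hx.1)
  have hψt := norm_le_gronwallBound_of_norm_deriv_right_le (δ := 0) (K := K) (ε := a) hψc hψ'
    (by simp [ψ])
    (fun x hx => by
      rw [Real.norm_of_nonneg (hφ0 x (Ico_subset_Icc_self hx)),
        Real.norm_of_nonneg (hψ0 x (Ico_subset_Icc_self hx))]
      linarith [hφ x (Ico_subset_Icc_self hx)]) t ht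
  rw [Real.norm_of_nonneg (hψ0 t ht), sub_zero] at hψt
  calc φ t ≤ a + K * gronwallBound 0 K a t := by
        linarith [hφ t ht, mul_le_mul_of_nonneg_left hψt hK]
    _ = a * Real.exp (K * t) := add_mul_gronwallBound_δ0 a K t
    _ ≤ a * Real.exp (K * T) := by gcongr; exact ht.2

theorem MeasureTheory.IntegrableOn.intervalIntegrable_of_mem_Icc {E : Type*}
    [NormedAddCommGroup E] {F : ℝ → E} {μ : Measure ℝ} {a b t : ℝ}
    (hF : IntegrableOn F (Icc a b) μ) (ht : t ∈ Icc a b) : IntervalIntegrable F μ a t :=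
  (hF.mono_set (uIcc_subset_Icc (left_mem_Icc.2 (ht.1.trans ht.2)) ht)).intervalIntegrable

section Normed

variable {E : Type*} [NormedAddCommGroup E] [NormedSpace ℝ E]

theorem norm_le_integral_mul_exp_of_eq_integral {y g : ℝ → E} {h : ℝ → ℝ} {L T : ℝ}
    (hL : 0 ≤ L) (hy : ContinuousOn y (Icc 0 T)) (hg : IntegrableOn g (Icc 0 T))
    (hh : IntegrableOn h (Icc 0 T)) (hh0 : ∀ s ∈ Icc 0 T, 0 ≤ h s)
    (hyg : ∀ t ∈ Icc 0 T, y t = ∫ s in (0 : ℝ)..t, g s)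
    (hgh : ∀ s ∈ Icc 0 T, ‖g s‖ ≤ L * ‖y s‖ + h s) :
    ∀ t ∈ Icc 0 T, ‖y t‖ ≤ (∫ s in (0 : ℝ)..T, h s) * Real.exp (L * T) := by
  intro t₀ ht₀
  have hT : 0 ≤ T := ht₀.1.trans ht₀.2
  refine le_mul_exp_of_le_add_mul_integral hL (intervalIntegral.integral_nonneg hT hh0) hy.norm
    (fun _ _ => norm_nonneg _) (fun t ht => ?_) t₀ ht₀
  have hyi : IntervalIntegrable (fun s => ‖y s‖) volume 0 t :=
    hy.norm.integrableOn_Icc.intervalIntegrable_of_mem_Icc ht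
  have hhi := hh.intervalIntegrable_of_mem_Icc ht
  calc ‖y t‖ = ‖∫ s in (0 : ℝ)..t, g s‖ := by rw [hyg t ht]
    _ ≤ ∫ s in (0 : ℝ)..t, ‖g s‖ := intervalIntegral.norm_integral_le_integral_norm ht.1
    _ ≤ ∫ s in (0 : ℝ)..t, (L * ‖y s‖ + h s) :=
        intervalIntegral.integral_mono_on ht.1 (hg.intervalIntegrable_of_mem_Icc ht).norm
          ((hyi.const_mul L).add hhi) fun s hs => hgh s ⟨hs.1, hs.2.trans ht.2⟩
    _ = (∫ s in (0 : ℝ)..t, h s) + L * ∫ s in (0 : ℝ)..t, ‖y s‖ := by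
        rw [intervalIntegral.integral_add (hyi.const_mul L) hhi,
          intervalIntegral.integral_const_mul, add_comm]
    _ ≤ (∫ s in (0 : ℝ)..T, h s) + L * ∫ s in (0 : ℝ)..t, ‖y s‖ := by
        gcongr
        exact intervalIntegral.integral_mono_interval le_rfl ht.1 ht.2
          (ae_restrict_of_forall_mem measurableSet_Ioc fun s hs => hh0 s (Ioc_subset_Icc_self hs))
          (hh.intervalIntegrable_of_mem_Icc (right_mem_Icc.2 hT))

variable {F : Type*} [NormedAddCommGroup F] [NormedSpace ℝ F]

def taylorRemainder (φ : E → F) (φ' : E →L[ℝ] F) (x y : E) : F := φ y - φ x - φ' (y - x)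

theorem norm_taylorRemainder_le {φ : E → F} {φ' : E →L[ℝ] F} {L : ℝ}
    (hφ : ∀ x y, ‖φ y - φ x‖ ≤ L * ‖y - x‖) (hφ' : ‖φ'‖ ≤ L) (x y : E) :
    ‖taylorRemainder φ φ' x y‖ ≤ 2 * L * ‖y - x‖ := by
  have := φ'.le_of_opNorm_le hφ' (y - x)
  calc ‖taylorRemainder φ φ' x y‖ ≤ ‖φ y - φ x‖ + ‖φ' (y - x)‖ := norm_sub_le _ _
    _ ≤ 2 * L * ‖y - x‖ := by linarith [hφ x y]

theorem HasFDerivAt.tendsto_inv_smul_taylorRemainder {φ : E → F} {φ' : E →L[ℝ] F} {x : E}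
    (hφ : HasFDerivAt φ φ' x) {y : ℝ → E} {C : ℝ}
    (hy : ∀ᶠ α in 𝓝[>] 0, ‖y α - x‖ ≤ C * α) :
    Tendsto (fun α => α⁻¹ • taylorRemainder φ φ' x (y α)) (𝓝[>] 0) (𝓝 0) := by
  have hyO : (fun α => y α - x) =O[𝓝[>] 0] fun α : ℝ => α := by
    refine Asymptotics.IsBigO.of_bound C ?_
    filter_upwards [hy, self_mem_nhdsWithin] with α hα (hα0 : 0 < α)
    rwa [Real.norm_of_nonneg hα0.le]
  have hyx : Tendsto y (𝓝[>] 0) (𝓝 x) := by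
    have := hyO.trans_tendsto (tendsto_nhdsWithin_of_tendsto_nhds tendsto_id)
    simpa using this.add_const x
  exact ((hφ.isLittleO.comp_tendsto hyx).trans_isBigO hyO).tendsto_inv_smul_nhds_zero

end Normed

theorem tendstoUniformlyOn_of_norm_sub_le {ι β E : Type*} [SeminormedAddCommGroup E]
    {F : ι → β → E} {G : β → E} {b : ι → ℝ} {l : Filter ι} {s : Set β} (hb : Tendsto b l (𝓝 0))
    (hFG : ∀ᶠ i in l, ∀ x ∈ s, ‖F i x - G x‖ ≤ b i) : TendstoUniformlyOn F G l s := by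
  rw [Metric.tendstoUniformlyOn_iff]
  intro ε hε
  filter_upwards [hFG, hb.eventually (gt_mem_nhds hε)] with i hi hbi x hx
  rw [dist_eq_norm, norm_sub_rev]
  exact (hi x hx).trans_lt hbi

section Caratheodory

variable {S E U F : Type*} [MeasurableSpace S] {μ : Measure S}
  [TopologicalSpace E] [MetrizableSpace E] [SecondCountableTopology E] [MeasurableSpace E]
  [OpensMeasurableSpace E]
  [TopologicalSpace U] [MetrizableSpace U] [SecondCountableTopology U] [MeasurableSpace U]
  [OpensMeasurableSpace U]
  [TopologicalSpace F] [PseudoMetrizableSpace F] [SecondCountableTopology F] [MeasurableSpace F]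
  [BorelSpace F]

theorem AEMeasurable.aestronglyMeasurable_caratheodory {f : S → E → U → F}
    (hfm : ∀ x u, Measurable fun t => f t x u) (hfc : ∀ t, Continuous fun p : E × U => f t p.1 p.2)
    {y : S → E} {v : S → U} (hy : AEMeasurable y μ) (hv : AEMeasurable v μ) :
    AEStronglyMeasurable (fun t => f t (y t) (v t)) μ :=
  ((measurable_uncurry_of_continuous_of_measurable (u := fun (p : E × U) t => f t p.1 p.2) hfc
    fun p => hfm p.1 p.2).comp_aemeasurable
      ((hy.prodMk hv).prodMk aemeasurable_id)).aestronglyMeasurable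

end Caratheodory

section FDerivMeasurable

variable {S E F : Type*} [MeasurableSpace S] {μ : Measure S}
  [NormedAddCommGroup E] [NormedSpace ℝ E] [MeasurableSpace E] [BorelSpace E]
  [SecondCountableTopology E]
  [NormedAddCommGroup F] [NormedSpace ℝ F]

theorem aestronglyMeasurable_fderiv_apply {f : S → E → F} {D : S → E →L[ℝ] F} {y w : S → E}
    (hf : ∀ z : S → E, AEMeasurable z μ → AEStronglyMeasurable (fun t => f t (z t)) μ)
    (hD : ∀ t, HasFDerivAt (f t) (D t) (y t)) (hy : AEMeasurable y μ) (hw : AEMeasurable w μ) :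
    AEStronglyMeasurable (fun t => D t (w t)) μ := by
  set c : ℕ → ℝ := fun k => 1 / ((k : ℝ) + 1)
  have hc : Tendsto c atTop (𝓝[≠] 0) :=
    tendsto_nhdsWithin_of_tendsto_nhds_of_eventually_within _
      tendsto_one_div_add_atTop_nhds_zero_nat (Eventually.of_forall fun k => by
        simp only [mem_compl_iff, mem_singleton_iff, c]; positivity)
  refine aestronglyMeasurable_of_tendsto_ae atTop
    (f := fun k t => (c k)⁻¹ • (f t (y t + c k • w t) - f t (y t)))
    (fun k => ((hf _ (hy.add (hw.const_smul _))).sub (hf y hy)).const_smul _) ?_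
  exact ae_of_all _ fun t => ((hD t).hasLineDerivAt (w t)).tendsto_slope_zero.comp hc

end FDerivMeasurable

section Dynamics

variable {E U : Type*} [NormedAddCommGroup E] [NormedSpace ℝ E] [MeasurableSpace E]
  [TopologicalSpace U]

/-- The standing assumptions (S1)–(S2) on the dynamics `f` and its `x`-derivative `fx`. -/
structure IsAdmissibleDynamics (L : ℝ) (f : ℝ → E → U → E) (fx : ℝ → E → U → E →L[ℝ] E) :
    Prop where
  measurable : ∀ x u, Measurable fun t => f t x u
  continuous : ∀ t, Continuous fun p : E × U => f t p.1 p.2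
  hasFDerivAt : ∀ t x u, HasFDerivAt (fun y => f t y u) (fx t x u) x
  lipschitz : ∀ t x x' u, ‖f t x u - f t x' u‖ ≤ L * ‖x - x'‖
  norm_zero_le : ∀ t u, ‖f t 0 u‖ ≤ L

noncomputable def linearizationError (L : ℝ) (f : ℝ → E → U → E) (fx : ℝ → E → U → E →L[ℝ] E)
    (ubar : ℝ → U) (xbar y : ℝ → E) (α s : ℝ) : ℝ :=
  ‖α⁻¹ • taylorRemainder (fun z => f s z (ubar s)) (fx s (xbar s) (ubar s)) (xbar s) (y s)‖ +
    2 * L * ‖y s - xbar s‖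

namespace IsAdmissibleDynamics

variable {L T : ℝ} {f : ℝ → E → U → E} {fx : ℝ → E → U → E →L[ℝ] E}

theorem nonneg (hf : IsAdmissibleDynamics L f fx) (u : U) : 0 ≤ L :=
  (norm_nonneg _).trans (hf.norm_zero_le 0 u)

theorem norm_le (hf : IsAdmissibleDynamics L f fx) (t : ℝ) (x : E) (u : U) :
    ‖f t x u‖ ≤ L * (1 + ‖x‖) := by
  have hLip := hf.lipschitz t x 0 u
  rw [sub_zero] at hLip
  linarith [norm_le_insert' (f t x u) (f t 0 u), hf.norm_zero_le t u]

theorem norm_fx_le (hf : IsAdmissibleDynamics L f fx) (t : ℝ) (x : E) (u : U) :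
    ‖fx t x u‖ ≤ L :=
  (hf.hasFDerivAt t x u).le_of_lip' (hf.nonneg u)
    (Eventually.of_forall fun y => hf.lipschitz t y x u)

theorem norm_convexCombination_sub_le (hf : IsAdmissibleDynamics L f fx) {α : ℝ}
    (hα : α ∈ Icc (0 : ℝ) 1) (t : ℝ) (y xbar : E) (ubar u : U) :
    ‖(1 - α) • f t y ubar + α • f t y u - f t xbar ubar‖ ≤
      L * ‖y - xbar‖ + α * ‖f t xbar u - f t xbar ubar‖ := by
  rw [show (1 - α) • f t y ubar + α • f t y u - f t xbar ubar =
      (1 - α) • (f t y ubar - f t xbar ubar) + α • (f t y u - f t xbar u) +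
        α • (f t xbar u - f t xbar ubar) by module]
  refine (norm_add₃_le ..).trans ?_
  rw [norm_smul, norm_smul, norm_smul, Real.norm_of_nonneg (sub_nonneg.2 hα.2),
    Real.norm_of_nonneg hα.1]
  have hubar := mul_le_mul_of_nonneg_left (hf.lipschitz t y xbar ubar) (sub_nonneg.2 hα.2)
  have hu := mul_le_mul_of_nonneg_left (hf.lipschitz t y xbar u) hα.1
  linarith

theorem norm_inv_smul_sub_variational_le (hf : IsAdmissibleDynamics L f fx) {α : ℝ}
    (hα : 0 < α) (t : ℝ) (y xbar X : E) (ubar u : U) :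
    ‖α⁻¹ • ((1 - α) • f t y ubar + α • f t y u - f t xbar ubar) -
        (fx t xbar ubar X + f t xbar u - f t xbar ubar)‖ ≤
      L * ‖α⁻¹ • (y - xbar) - X‖ +
        (‖α⁻¹ • taylorRemainder (fun z => f t z ubar) (fx t xbar ubar) xbar y‖ +
          2 * L * ‖y - xbar‖) := by
  rw [show α⁻¹ • ((1 - α) • f t y ubar + α • f t y u - f t xbar ubar) -
        (fx t xbar ubar X + f t xbar u - f t xbar ubar) =
      fx t xbar ubar (α⁻¹ • (y - xbar) - X) +
        α⁻¹ • taylorRemainder (fun z => f t z ubar) (fx t xbar ubar) xbar y +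
        ((f t y u - f t xbar u) - (f t y ubar - f t xbar ubar)) by
    rw [taylorRemainder, map_sub, map_smul]
    match_scalars <;> field_simp <;> ring]
  refine (norm_add₃_le ..).trans ?_
  have hfx := (fx t xbar ubar).le_of_opNorm_le (hf.norm_fx_le t xbar ubar) (α⁻¹ • (y - xbar) - X)
  have hu := hf.lipschitz t y xbar u
  have hubar := hf.lipschitz t y xbar ubar
  linarith [norm_sub_le (f t y u - f t xbar u) (f t y ubar - f t xbar ubar)]

variable [BorelSpace E] [SecondCountableTopology E] [MetrizableSpace U] [SecondCountableTopology U]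
  [MeasurableSpace U] [OpensMeasurableSpace U]

theorem integrableOn_comp (hf : IsAdmissibleDynamics L f fx) {y : ℝ → E} {v : ℝ → U}
    (hy : ContinuousOn y (Icc 0 T)) (hv : Measurable v) :
    IntegrableOn (fun t => f t (y t) (v t)) (Icc 0 T) := by
  obtain ⟨M, hM⟩ := isCompact_Icc.exists_bound_of_continuousOn hy
  refine Integrable.of_bound ((hy.aemeasurable measurableSet_Icc).aestronglyMeasurable_caratheodory
    hf.measurable hf.continuous hv.aemeasurable) (L * (1 + M))
    (ae_restrict_of_forall_mem measurableSet_Icc fun t ht => ?_)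
  calc ‖f t (y t) (v t)‖ ≤ L * (1 + ‖y t‖) := hf.norm_le t (y t) (v t)
    _ ≤ L * (1 + M) := by have := hf.nonneg (v t); gcongr; exact hM t ht

theorem integrableOn_fx_apply (hf : IsAdmissibleDynamics L f fx) {x w : ℝ → E} {v : ℝ → U}
    (hx : ContinuousOn x (Icc 0 T)) (hw : ContinuousOn w (Icc 0 T)) (hv : Measurable v) :
    IntegrableOn (fun t => fx t (x t) (v t) (w t)) (Icc 0 T) := by
  obtain ⟨M, hM⟩ := isCompact_Icc.exists_bound_of_continuousOn hw
  refine Integrable.of_bound (aestronglyMeasurable_fderiv_apply (f := fun t z => f t z (v t))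
    (fun z hz => hz.aestronglyMeasurable_caratheodory hf.measurable hf.continuous hv.aemeasurable)
    (fun t => hf.hasFDerivAt t (x t) (v t)) (hx.aemeasurable measurableSet_Icc)
    (hw.aemeasurable measurableSet_Icc)) (L * M)
    (ae_restrict_of_forall_mem measurableSet_Icc fun t ht => ?_)
  exact (fx t (x t) (v t)).le_of_opNorm_le_of_le (hf.norm_fx_le t (x t) (v t)) (hM t ht)

theorem integrableOn_taylorRemainder (hf : IsAdmissibleDynamics L f fx) {x y : ℝ → E} {v : ℝ → U}
    (hx : ContinuousOn x (Icc 0 T)) (hy : ContinuousOn y (Icc 0 T)) (hv : Measurable v) :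
    IntegrableOn (fun t => taylorRemainder (fun z => f t z (v t)) (fx t (x t) (v t)) (x t) (y t))
      (Icc 0 T) :=
  ((hf.integrableOn_comp hy hv).sub (hf.integrableOn_comp hx hv)).sub
    (hf.integrableOn_fx_apply hx (hy.sub hx) hv)

theorem integrableOn_linearizationError (hf : IsAdmissibleDynamics L f fx) {ubar : ℝ → U}
    (hubar : Measurable ubar) {xbar y : ℝ → E}
    (hxbarc : ContinuousOn xbar (Icc 0 T)) (hyc : ContinuousOn y (Icc 0 T)) (α : ℝ) :
    IntegrableOn (fun s => linearizationError L f fx ubar xbar y α s) (Icc 0 T) :=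
  ((hf.integrableOn_taylorRemainder hxbarc hyc hubar).smul α⁻¹).norm.add
    ((hyc.sub hxbarc).norm.integrableOn_Icc.const_mul (2 * L))

theorem norm_sub_le_mul (hf : IsAdmissibleDynamics L f fx) {α : ℝ} (hα : α ∈ Icc (0 : ℝ) 1) {x0 : E}
    {ubar u : ℝ → U} (hubar : Measurable ubar) (hu : Measurable u) {xbar y : ℝ → E}
    (hxbarc : ContinuousOn xbar (Icc 0 T))
    (hxbar : ∀ t ∈ Icc 0 T, xbar t = x0 + ∫ s in (0 : ℝ)..t, f s (xbar s) (ubar s))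
    (hyc : ContinuousOn y (Icc 0 T))
    (hy : ∀ t ∈ Icc 0 T, y t = x0 + ∫ s in (0 : ℝ)..t,
        ((1 - α) • f s (y s) (ubar s) + α • f s (y s) (u s))) :
    ∀ t ∈ Icc 0 T, ‖y t - xbar t‖ ≤
      ((∫ s in (0 : ℝ)..T, ‖f s (xbar s) (u s) - f s (xbar s) (ubar s)‖) *
        Real.exp (L * T)) * α := by
  have hg : IntegrableOn (fun s => (1 - α) • f s (y s) (ubar s) + α • f s (y s) (u s))
      (Icc 0 T) :=
    ((hf.integrableOn_comp hyc hubar).smul (1 - α)).add ((hf.integrableOn_comp hyc hu).smul α)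
  have hgbar := hf.integrableOn_comp hxbarc hubar
  have hΔ := (hf.integrableOn_comp hxbarc hu).sub hgbar
  intro t ht
  calc ‖y t - xbar t‖
      ≤ (∫ s in (0 : ℝ)..T, α * ‖f s (xbar s) (u s) - f s (xbar s) (ubar s)‖) *
          Real.exp (L * T) := by
        refine norm_le_integral_mul_exp_of_eq_integral (hf.nonneg (u 0)) (hyc.sub hxbarc)
          (hg.sub hgbar) (hΔ.norm.const_mul α) (fun s _ => mul_nonneg hα.1 (norm_nonneg _))
          (fun t ht => ?_)
          (fun s _ => hf.norm_convexCombination_sub_le hα s (y s) (xbar s) (ubar s) (u s)) t ht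
        simp only [Pi.sub_apply]
        rw [hy t ht, hxbar t ht, intervalIntegral.integral_sub
          (hg.intervalIntegrable_of_mem_Icc ht) (hgbar.intervalIntegrable_of_mem_Icc ht)]
        abel
    _ = _ := by rw [intervalIntegral.integral_const_mul]; ring

theorem norm_inv_smul_sub_sub_le (hf : IsAdmissibleDynamics L f fx) {α : ℝ}
    (hα : α ∈ Ioc (0 : ℝ) 1) {x0 : E}
    {ubar u : ℝ → U} (hubar : Measurable ubar) (hu : Measurable u) {xbar y X : ℝ → E}
    (hxbarc : ContinuousOn xbar (Icc 0 T))
    (hxbar : ∀ t ∈ Icc 0 T, xbar t = x0 + ∫ s in (0 : ℝ)..t, f s (xbar s) (ubar s))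
    (hyc : ContinuousOn y (Icc 0 T))
    (hy : ∀ t ∈ Icc 0 T, y t = x0 + ∫ s in (0 : ℝ)..t,
        ((1 - α) • f s (y s) (ubar s) + α • f s (y s) (u s)))
    (hXc : ContinuousOn X (Icc 0 T))
    (hX : ∀ t ∈ Icc 0 T, X t = ∫ s in (0 : ℝ)..t,
        ((fx s (xbar s) (ubar s)) (X s) + f s (xbar s) (u s) - f s (xbar s) (ubar s))) :
    ∀ t ∈ Icc 0 T, ‖α⁻¹ • (y t - xbar t) - X t‖ ≤
      (∫ s in (0 : ℝ)..T, linearizationError L f fx ubar xbar y α s) * Real.exp (L * T) := by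
  have hg : IntegrableOn (fun s => (1 - α) • f s (y s) (ubar s) + α • f s (y s) (u s))
      (Icc 0 T) :=
    ((hf.integrableOn_comp hyc hubar).smul (1 - α)).add ((hf.integrableOn_comp hyc hu).smul α)
  have hgbar := hf.integrableOn_comp hxbarc hubar
  have hB : IntegrableOn
      (fun s => (fx s (xbar s) (ubar s)) (X s) + f s (xbar s) (u s) - f s (xbar s) (ubar s))
      (Icc 0 T) :=
    ((hf.integrableOn_fx_apply hxbarc hXc hubar).add (hf.integrableOn_comp hxbarc hu)).sub hgbar
  have hG : IntegrableOn (fun s => α⁻¹ • ((1 - α) • f s (y s) (ubar s) + α • f s (y s) (u s) -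
      f s (xbar s) (ubar s)) -
      ((fx s (xbar s) (ubar s)) (X s) + f s (xbar s) (u s) - f s (xbar s) (ubar s))) (Icc 0 T) :=
    ((hg.sub hgbar).smul α⁻¹).sub hB
  refine norm_le_integral_mul_exp_of_eq_integral (hf.nonneg (u 0))
    (((hyc.sub hxbarc).const_smul α⁻¹).sub hXc) hG
    (hf.integrableOn_linearizationError hubar hxbarc hyc α)
    (fun s _ => by have := hf.nonneg (u 0); unfold linearizationError; positivity)
    (fun t ht => ?_) (fun s _ => hf.norm_inv_smul_sub_variational_le hα.1 s _ _ _ _ _)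
  have hgi : IntervalIntegrable (fun s => α⁻¹ • ((1 - α) • f s (y s) (ubar s) +
      α • f s (y s) (u s) - f s (xbar s) (ubar s))) volume 0 t :=
    IntegrableOn.intervalIntegrable_of_mem_Icc ((hg.sub hgbar).smul α⁻¹) ht
  rw [intervalIntegral.integral_sub hgi (hB.intervalIntegrable_of_mem_Icc ht),
    intervalIntegral.integral_smul, ← hX t ht, intervalIntegral.integral_sub
      (hg.intervalIntegrable_of_mem_Icc ht) (hgbar.intervalIntegrable_of_mem_Icc ht),
    hy t ht, hxbar t ht, add_sub_add_left_eq_sub]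

theorem tendsto_integral_linearizationError (hf : IsAdmissibleDynamics L f fx) (hT : 0 ≤ T)
    {C : ℝ} {ubar : ℝ → U}
    (hubar : Measurable ubar) {xbar : ℝ → E} (hxbarc : ContinuousOn xbar (Icc 0 T))
    {xa : ℝ → ℝ → E} (hxac : ∀ α ∈ Ioc (0 : ℝ) 1, ContinuousOn (xa α) (Icc 0 T))
    (hC : ∀ α ∈ Ioc (0 : ℝ) 1, ∀ t ∈ Icc 0 T, ‖xa α t - xbar t‖ ≤ C * α) :
    Tendsto (fun α => ∫ s in (0 : ℝ)..T, linearizationError L f fx ubar xbar (xa α) α s)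
      (𝓝[>] 0) (𝓝 0) := by
  have hmem : Ioc (0 : ℝ) 1 ∈ 𝓝[>] 0 := Ioc_mem_nhdsGT zero_lt_one
  have hL := hf.nonneg (ubar 0)
  have hC0 : 0 ≤ C := by
    nlinarith [hC 1 ⟨one_pos, le_rfl⟩ 0 ⟨le_rfl, hT⟩, norm_nonneg (xa 1 0 - xbar 0)]
  rw [show 𝓝 (0 : ℝ) = 𝓝 (∫ _ in (0 : ℝ)..T, (0 : ℝ)) by simp]
  refine intervalIntegral.tendsto_integral_filter_of_dominated_convergence
    (fun _ => 4 * L * C) ?meas ?bound intervalIntegrable_const ?lim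
  case meas =>
    filter_upwards [hmem] with α hα
    rw [uIoc_of_le hT]
    exact ((hf.integrableOn_linearizationError hubar hxbarc (hxac α hα) α).mono_set
      Ioc_subset_Icc_self).aestronglyMeasurable
  case bound =>
    filter_upwards [hmem] with α hα
    refine ae_of_all _ fun s hs => ?_
    rw [uIoc_of_le hT] at hs
    have hd := hC α hα s (Ioc_subset_Icc_self hs)
    have hrem := norm_taylorRemainder_le (fun x y => hf.lipschitz s y x (ubar s))
      (hf.norm_fx_le s (xbar s) (ubar s)) (xbar s) (xa α s)
    have hα0 : 0 ≤ α⁻¹ := inv_nonneg.2 hα.1.le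
    rw [linearizationError, Real.norm_of_nonneg (by positivity), norm_smul,
      Real.norm_of_nonneg hα0]
    calc α⁻¹ * ‖taylorRemainder (fun z => f s z (ubar s)) (fx s (xbar s) (ubar s)) (xbar s)
            (xa α s)‖ + 2 * L * ‖xa α s - xbar s‖
        ≤ α⁻¹ * (2 * L * (C * α)) + 2 * L * (C * α) := by gcongr; exact hrem.trans (by gcongr)
      _ = 2 * L * C + 2 * L * C * α := by field_simp [hα.1.ne']
      _ ≤ 4 * L * C := by nlinarith [hα.2, mul_nonneg hL hC0]
  case lim =>
    refine ae_of_all _ fun s hs => ?_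
    rw [uIoc_of_le hT] at hs
    have hy : ∀ᶠ α in 𝓝[>] 0, ‖xa α s - xbar s‖ ≤ C * α := by
      filter_upwards [hmem] with α hα using hC α hα s (Ioc_subset_Icc_self hs)
    have hd : Tendsto (fun α => 2 * L * ‖xa α s - xbar s‖) (𝓝[>] 0) (𝓝 0) := by
      refine squeeze_zero' (Eventually.of_forall fun α => by positivity)
        (hy.mono fun α hα => mul_le_mul_of_nonneg_left hα (by positivity)) ?_
      exact ((by fun_prop : Continuous fun α : ℝ => 2 * L * (C * α)).tendsto' 0 0
        (by simp)).mono_left nhdsWithin_le_nhds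
    simpa [linearizationError] using
      ((hf.hasFDerivAt s (xbar s) (ubar s)).tendsto_inv_smul_taylorRemainder hy).norm.add hd

end IsAdmissibleDynamics

end Dynamics

theorem stmt_4_general {n : ℕ} {U : Type*} [MetricSpace U] [TopologicalSpace.SeparableSpace U]
    [MeasurableSpace U] [BorelSpace U]
    (T L : ℝ) (hT : 0 < T)
    (x0 : EuclideanSpace ℝ (Fin n))
    (f : ℝ → EuclideanSpace ℝ (Fin n) → U → EuclideanSpace ℝ (Fin n))
    (fx : ℝ → EuclideanSpace ℝ (Fin n) → U → (EuclideanSpace ℝ (Fin n) →L[ℝ] EuclideanSpace ℝ (Fin n)))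
    -- (S1)-(S2)
    (hfm : ∀ x u, Measurable (fun t => f t x u))
    (hfc : ∀ t, Continuous (fun p : EuclideanSpace ℝ (Fin n) × U => f t p.1 p.2))
    (hdf : ∀ t x u, HasFDerivAt (fun y => f t y u) (fx t x u) x)
    (hfLip : ∀ t x x' u, ‖f t x u - f t x' u‖ ≤ L * ‖x - x'‖)
    (hfbd : ∀ t u, ‖f t 0 u‖ ≤ L)
    -- controls
    (ubar u : ℝ → U) (hubar : Measurable ubar) (hu : Measurable u)
    -- states
    (xbar : ℝ → EuclideanSpace ℝ (Fin n)) (hxbarc : ContinuousOn xbar (Icc 0 T))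
    (hxbar : ∀ t ∈ Icc 0 T, xbar t = x0 + ∫ s in (0:ℝ)..t, f s (xbar s) (ubar s))
    (xa : ℝ → ℝ → EuclideanSpace ℝ (Fin n))
    (hxac : ∀ α ∈ Ioc (0:ℝ) 1, ContinuousOn (xa α) (Icc 0 T))
    (hxa : ∀ α ∈ Ioc (0:ℝ) 1, ∀ t ∈ Icc 0 T, xa α t = x0 + ∫ s in (0:ℝ)..t,
        ((1 - α) • f s (xa α s) (ubar s) + α • f s (xa α s) (u s)))
    -- solution of the variational equation
    (X : ℝ → EuclideanSpace ℝ (Fin n)) (hXc : ContinuousOn X (Icc 0 T))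
    (hX : ∀ t ∈ Icc 0 T, X t = ∫ s in (0:ℝ)..t,
        ((fx s (xbar s) (ubar s)) (X s) + f s (xbar s) (u s) - f s (xbar s) (ubar s))) :
    TendstoUniformlyOn (fun α t => (α : ℝ)⁻¹ • (xa α t - xbar t)) X
      (nhdsWithin 0 (Ioi 0)) (Icc 0 T) := by
  have := UniformSpace.secondCountable_of_separable U
  have hf : IsAdmissibleDynamics L f fx := ⟨hfm, hfc, hdf, hfLip, hfbd⟩
  have hC := fun α (hα : α ∈ Ioc (0 : ℝ) 1) => hf.norm_sub_le_mul (Ioc_subset_Icc_self hα)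
    hubar hu hxbarc hxbar (hxac α hα) (hxa α hα)
  refine tendstoUniformlyOn_of_norm_sub_le ?_ (eventually_of_mem (Ioc_mem_nhdsGT zero_lt_one)
    fun α hα => hf.norm_inv_smul_sub_sub_le hα hubar hu hxbarc hxbar (hxac α hα) (hxa α hα)
      hXc hX)
  simpa using (hf.tendsto_integral_linearizationError hT.le hubar hxbarc hxac hC).mul_const
    (Real.exp (L * T))

theorem stmt_4 {n : ℕ} {U : Type*} [MetricSpace U] [TopologicalSpace.SeparableSpace U]
    [MeasurableSpace U] [BorelSpace U]
    (T L : ℝ) (hT : 0 < T) (hL : 0 < L)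
    (x0 : EuclideanSpace ℝ (Fin n))
    (f : ℝ → EuclideanSpace ℝ (Fin n) → U → EuclideanSpace ℝ (Fin n))
    (fx : ℝ → EuclideanSpace ℝ (Fin n) → U → (EuclideanSpace ℝ (Fin n) →L[ℝ] EuclideanSpace ℝ (Fin n)))
    -- (S1)-(S2)
    (hfm : ∀ x u, Measurable (fun t => f t x u))
    (hfc : ∀ t, Continuous (fun p : EuclideanSpace ℝ (Fin n) × U => f t p.1 p.2))
    (hdf : ∀ t x u, HasFDerivAt (fun y => f t y u) (fx t x u) x)
    (hfLip : ∀ t x x' u, ‖f t x u - f t x' u‖ ≤ L * ‖x - x'‖)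
    (hfbd : ∀ t u, ‖f t 0 u‖ ≤ L)
    -- controls
    (ubar u : ℝ → U) (hubar : Measurable ubar) (hu : Measurable u)
    -- states
    (xbar : ℝ → EuclideanSpace ℝ (Fin n)) (hxbarc : ContinuousOn xbar (Icc 0 T))
    (hxbar : ∀ t ∈ Icc 0 T, xbar t = x0 + ∫ s in (0:ℝ)..t, f s (xbar s) (ubar s))
    (xa : ℝ → ℝ → EuclideanSpace ℝ (Fin n))
    (hxac : ∀ α ∈ Ioc (0:ℝ) 1, ContinuousOn (xa α) (Icc 0 T))
    (hxa : ∀ α ∈ Ioc (0:ℝ) 1, ∀ t ∈ Icc 0 T, xa α t = x0 + ∫ s in (0:ℝ)..t,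
        ((1 - α) • f s (xa α s) (ubar s) + α • f s (xa α s) (u s)))
    -- solution of the variational equation
    (X : ℝ → EuclideanSpace ℝ (Fin n)) (hXc : ContinuousOn X (Icc 0 T))
    (hX : ∀ t ∈ Icc 0 T, X t = ∫ s in (0:ℝ)..t,
        ((fx s (xbar s) (ubar s)) (X s) + f s (xbar s) (u s) - f s (xbar s) (ubar s))) :
    TendstoUniformlyOn (fun α t => (α : ℝ)⁻¹ • (xa α t - xbar t)) X
      (nhdsWithin 0 (Ioi 0)) (Icc 0 T) :=
  stmt_4_general T L hT x0 f fx hfm hfc hdf hfLip hfbd ubar u hubar hu xbar hxbarc hxbar xa hxac hxa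
    X hXc hX
end

section
/- Let $F,G:[0,T]\to\mathbb{R}^n$ be bounded measurable. If for every $\beta\in[0,T)$ and every $\alpha\in(0,T-\beta)$ one has $\int_\beta^{\beta+\alpha}dt\int_\beta^t\langle F(t),G(s)\rangle\,ds\le0$, then $\langle F(t),G(t)\rangle\le0$ for a.e. $t\in[0,T]$. -/
/-!
At a Lebesgue point `β` of `F` and `G`, replacing `⟪F t, G s⟫` by `⟪F β, G β⟫` in the double
integral over the triangle `β ≤ s ≤ t ≤ β + α` costs at most
`α (CG ∫ ‖F - F β‖ + CF ∫ ‖G - G β‖) = o(α²)`, the integrals running over `[β, β + α]`.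
Since the triangle has area `α² / 2`, the hypothesis gives `α² / 2 ⟪F β, G β⟫ ≤ o(α²)`.
-/

open MeasureTheory Set Filter Topology
open scoped RealInnerProductSpace

section Bounded

variable {E : Type*} [NormedAddCommGroup E] {f : ℝ → E} {C : ℝ}

lemma locallyIntegrable_of_norm_le (hf : AEStronglyMeasurable f volume)
    (hC : ∀ t, ‖f t‖ ≤ C) : LocallyIntegrable f volume :=
  (memLp_top_of_bound hf C (.of_forall hC)).locallyIntegrable le_top

lemma intervalIntegrable_of_norm_le (hf : AEStronglyMeasurable f volume)
    (hC : ∀ t, ‖f t‖ ≤ C) (a b : ℝ) : IntervalIntegrable f volume a b :=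
  ((locallyIntegrable_of_norm_le hf hC).integrableOn_isCompact isCompact_uIcc).intervalIntegrable

end Bounded

lemma MeasureTheory.LocallyIntegrable.ae_tendsto_intervalAverage_norm_sub_right
    {E : Type*} [NormedAddCommGroup E] {f : ℝ → E} (hf : LocallyIntegrable f volume) :
    ∀ᵐ x, Tendsto (fun y => ⨍ t in x..y, ‖f t - f x‖) (𝓝[>] x) (𝓝 0) := by
  filter_upwards [(IsUnifLocDoublingMeasure.vitaliFamily volume 1).ae_tendsto_average_norm_sub hf]
    with x hx
  refine (hx.comp (Real.tendsto_Icc_vitaliFamily_right x)).congr' ?_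
  filter_upwards [self_mem_nhdsWithin] with y (hy : x < y)
  rw [Function.comp_apply, uIoc_of_le hy.le, setAverage_congr Ioc_ae_eq_Icc]

lemma norm_integral_sub_smul_le_integral_norm_sub {E : Type*} [NormedAddCommGroup E]
    [NormedSpace ℝ E] [CompleteSpace E] {g : ℝ → E} {a t b : ℝ}
    (hg : IntervalIntegrable g volume a b)
    (hat : a ≤ t) (htb : t ≤ b) :
    ‖(∫ s in a..t, g s) - (t - a) • g a‖ ≤ ∫ s in a..b, ‖g s - g a‖ := by
  have hg' : IntervalIntegrable g volume a t := hg.mono_set (by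
    rw [uIcc_of_le hat, uIcc_of_le (hat.trans htb)]; exact Icc_subset_Icc le_rfl htb)
  calc ‖(∫ s in a..t, g s) - (t - a) • g a‖ = ‖∫ s in a..t, (g s - g a)‖ := by
        rw [intervalIntegral.integral_sub hg' intervalIntegrable_const,
          intervalIntegral.integral_const]
    _ ≤ ∫ s in a..t, ‖g s - g a‖ := intervalIntegral.norm_integral_le_integral_norm hat
    _ ≤ ∫ s in a..b, ‖g s - g a‖ :=
        intervalIntegral.integral_mono_interval le_rfl hat htb
          (.of_forall fun _ => norm_nonneg _) (hg.sub intervalIntegrable_const).norm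

section InnerProduct

variable {E : Type*} [NormedAddCommGroup E] [InnerProductSpace ℝ E] {F G : ℝ → E} {CF CG : ℝ}

lemma integral_inner_left_intervalIntegral [CompleteSpace E] {g : ℝ → E} {a b : ℝ}
    (hg : IntervalIntegrable g volume a b) (v : E) :
    ∫ s in a..b, ⟪v, g s⟫ = ⟪v, ∫ s in a..b, g s⟫ :=
  (innerSL ℝ v).intervalIntegral_comp_comm hg

lemma mul_inner_le_inner_integral_add [CompleteSpace E] {a t b : ℝ}
    (hCF : ∀ t, ‖F t‖ ≤ CF) (hCG : ∀ t, ‖G t‖ ≤ CG)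
    (hG : IntervalIntegrable G volume a b) (hat : a ≤ t) (htb : t ≤ b) :
    (t - a) * ⟪F a, G a⟫ ≤
      ⟪F t, ∫ s in a..t, G s⟫ + ((b - a) * CG * ‖F t - F a‖ + CF * ∫ s in a..b, ‖G s - G a‖) := by
  have hsplit : (t - a) * ⟪F a, G a⟫ - ⟪F t, ∫ s in a..t, G s⟫
      = ⟪F a - F t, (t - a) • G a⟫ + ⟪F t, (t - a) • G a - ∫ s in a..t, G s⟫ := by
    simp only [inner_sub_left, inner_sub_right, real_inner_smul_right]
    ring
  have hF : ⟪F a - F t, (t - a) • G a⟫ ≤ (b - a) * CG * ‖F t - F a‖ :=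
    calc ⟪F a - F t, (t - a) • G a⟫ ≤ ‖F a - F t‖ * ‖(t - a) • G a‖ := real_inner_le_norm _ _
      _ = ‖F t - F a‖ * ((t - a) * ‖G a‖) := by
        rw [norm_sub_rev, norm_smul, Real.norm_of_nonneg (sub_nonneg.2 hat)]
      _ ≤ ‖F t - F a‖ * ((b - a) * CG) := by
        gcongr
        · linarith
        · exact hCG a
      _ = (b - a) * CG * ‖F t - F a‖ := by ring
  have hG : ⟪F t, (t - a) • G a - ∫ s in a..t, G s⟫ ≤ CF * ∫ s in a..b, ‖G s - G a‖ :=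
    calc ⟪F t, (t - a) • G a - ∫ s in a..t, G s⟫
        ≤ ‖F t‖ * ‖(∫ s in a..t, G s) - (t - a) • G a‖ := by
          rw [norm_sub_rev]; exact real_inner_le_norm _ _
      _ ≤ CF * ∫ s in a..b, ‖G s - G a‖ :=
          mul_le_mul (hCF t) (norm_integral_sub_smul_le_integral_norm_sub hG hat htb)
            (norm_nonneg _) ((norm_nonneg _).trans (hCF t))
  linarith

lemma intervalIntegrable_inner_integral (hF : AEStronglyMeasurable F volume)
    (hG : AEStronglyMeasurable G volume) (hCF : ∀ t, ‖F t‖ ≤ CF) (hCG : ∀ t, ‖G t‖ ≤ CG)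
    (a b : ℝ) : IntervalIntegrable (fun t => ⟪F t, ∫ s in a..t, G s⟫) volume a b := by
  have hprim : Continuous fun t => ∫ s in a..t, G s :=
    intervalIntegral.continuous_primitive (intervalIntegrable_of_norm_le hG hCG) a
  refine ((by fun_prop : Continuous fun t => CF * CG * |t - a|).intervalIntegrable a b).mono_fun'
    (hF.inner hprim.aestronglyMeasurable).restrict (.of_forall fun t => ?_)
  calc ‖⟪F t, ∫ s in a..t, G s⟫‖ ≤ ‖F t‖ * ‖∫ s in a..t, G s‖ := norm_inner_le_norm _ _
    _ ≤ CF * (CG * |t - a|) :=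
        mul_le_mul (hCF t) (intervalIntegral.norm_integral_le_of_norm_le_const fun s _ => hCG s)
          (norm_nonneg _) ((norm_nonneg _).trans (hCF t))
    _ = CF * CG * |t - a| := by ring

lemma sq_div_two_mul_inner_le_integral_integral_inner_add [CompleteSpace E]
    (hF : AEStronglyMeasurable F volume) (hG : AEStronglyMeasurable G volume)
    (hCF : ∀ t, ‖F t‖ ≤ CF) (hCG : ∀ t, ‖G t‖ ≤ CG)
    {a b : ℝ} (hab : a ≤ b) :
    (b - a) ^ 2 / 2 * ⟪F a, G a⟫ ≤ (∫ t in a..b, ∫ s in a..t, ⟪F t, G s⟫) +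
      (b - a) * (CG * (∫ t in a..b, ‖F t - F a‖) + CF * ∫ t in a..b, ‖G t - G a‖) := by
  have hGint := intervalIntegrable_of_norm_le hG hCG
  have hFsub : IntervalIntegrable (fun t => ‖F t - F a‖) volume a b :=
    ((intervalIntegrable_of_norm_le hF hCF a b).sub intervalIntegrable_const).norm
  have hinner := intervalIntegrable_inner_integral hF hG hCF hCG a b
  have hmono := intervalIntegral.integral_mono_on hab
    ((by fun_prop : Continuous fun t => (t - a) * ⟪F a, G a⟫).intervalIntegrable a b)
    (hinner.add ((hFsub.const_mul _).add intervalIntegrable_const))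
    fun t ht => mul_inner_le_inner_integral_add hCF hCG (hGint a b) ht.1 ht.2
  have hleft : ∫ t in a..b, (t - a) * ⟪F a, G a⟫ = (b - a) ^ 2 / 2 * ⟪F a, G a⟫ := by
    rw [intervalIntegral.integral_mul_const, intervalIntegral.integral_comp_sub_right (fun x => x),
      integral_id]
    ring
  have hright : ∫ t in a..b, ∫ s in a..t, ⟪F t, G s⟫ = ∫ t in a..b, ⟪F t, ∫ s in a..t, G s⟫ :=
    intervalIntegral.integral_congr fun t _ => integral_inner_left_intervalIntegral (hGint a t) _
  rw [intervalIntegral.integral_add hinner ((hFsub.const_mul _).add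
      intervalIntegrable_const), intervalIntegral.integral_add (hFsub.const_mul _)
      intervalIntegrable_const, intervalIntegral.integral_const_mul,
      intervalIntegral.integral_const, hleft, smul_eq_mul] at hmono
  rw [hright]
  linarith

lemma inner_le_of_integral_integral_inner_nonpos [CompleteSpace E]
    (hF : AEStronglyMeasurable F volume) (hG : AEStronglyMeasurable G volume)
    (hCF : ∀ t, ‖F t‖ ≤ CF) (hCG : ∀ t, ‖G t‖ ≤ CG)
    {a b : ℝ} (hab : a < b) (h : ∫ t in a..b, ∫ s in a..t, ⟪F t, G s⟫ ≤ 0) :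
    ⟪F a, G a⟫ ≤ 2 * (CG * (⨍ t in a..b, ‖F t - F a‖) + CF * ⨍ t in a..b, ‖G t - G a‖) := by
  have key := sq_div_two_mul_inner_le_integral_integral_inner_add hF hG hCF hCG hab.le
  simp only [interval_average_eq, smul_eq_mul]
  refine le_of_mul_le_mul_left ?_ (show 0 < (b - a) ^ 2 / 2 by positivity)
  convert key.trans (add_le_of_nonpos_left h) using 1
  field_simp

end InnerProduct

theorem stmt_12_general {n : ℕ} (T : ℝ)
    (F G : ℝ → EuclideanSpace ℝ (Fin n))
    (hFm : Measurable F) (hGm : Measurable G)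
    (CF CG : ℝ) (hCF : ∀ t, ‖F t‖ ≤ CF) (hCG : ∀ t, ‖G t‖ ≤ CG)
    (h : ∀ β ∈ Ico (0:ℝ) T, ∀ α ∈ Ioo (0:ℝ) (T - β),
      (∫ t in β..(β + α), ∫ s in β..t, ⟪F t, G s⟫) ≤ 0) :
    ∀ᵐ t ∂(volume : Measure ℝ), t ∈ Icc 0 T → ⟪F t, G t⟫ ≤ 0 := by
  filter_upwards [(locallyIntegrable_of_norm_le hFm.aestronglyMeasurable hCF
      ).ae_tendsto_intervalAverage_norm_sub_right,
    (locallyIntegrable_of_norm_le hGm.aestronglyMeasurable hCG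
      ).ae_tendsto_intervalAverage_norm_sub_right,
    Measure.ae_ne volume T] with β hF hG hβT ⟨hβ0, hβT'⟩
  have hβ : β < T := lt_of_le_of_ne hβT' hβT
  have hbound : ∀ᶠ b in 𝓝[>] β, ⟪F β, G β⟫ ≤
      2 * (CG * (⨍ t in β..b, ‖F t - F β‖) + CF * ⨍ t in β..b, ‖G t - G β‖) := by
    filter_upwards [Ioo_mem_nhdsGT hβ] with b ⟨hβb, hbT⟩
    refine inner_le_of_integral_integral_inner_nonpos hFm.aestronglyMeasurable
      hGm.aestronglyMeasurable hCF hCG hβb ?_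
    simpa using h β ⟨hβ0, hβ⟩ (b - β) ⟨sub_pos.2 hβb, by linarith⟩
  have hlim := ((hF.const_mul CG).add (hG.const_mul CF)).const_mul 2
  simp only [mul_zero, add_zero] at hlim
  exact ge_of_tendsto hlim hbound

theorem stmt_12 {n : ℕ} (T : ℝ) (hT : 0 < T)
    (F G : ℝ → EuclideanSpace ℝ (Fin n))
    (hFm : Measurable F) (hGm : Measurable G)
    (CF CG : ℝ) (hCF : ∀ t, ‖F t‖ ≤ CF) (hCG : ∀ t, ‖G t‖ ≤ CG)
    (h : ∀ β ∈ Ico (0:ℝ) T, ∀ α ∈ Ioo (0:ℝ) (T - β),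
      (∫ t in β..(β + α), ∫ s in β..t, ⟪F t, G s⟫) ≤ 0) :
    ∀ᵐ t ∂(volume : Measure ℝ), t ∈ Icc 0 T → ⟪F t, G t⟫ ≤ 0 :=
  stmt_12_general T F G hFm hGm CF CG hCF hCG h
end
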